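/- Let d ≥ 1 and let β : ℕ → (0,∞) be a sequence with N·β(N) → 0 as N → ∞. Then (1/N^d)·log Z^N_{β(N)} − (1/N^d)·log((N^d)!) → 0 as N → ∞. (In other words, in the subcritical regime β ≪ 1/N, the permanent of A^N_β satisfies (1/N^d) log perm(A^N_β) = (1/N^d) log((N^d)!) + o(1), since Z^N_β = perm(A^N_β).) -/

import Mathlib

open Filter Topology

/-- The energy `H^N(π) = Σ_{x ∈ T^N} ‖x − π(x)‖` of a permutation of the
lattice box `T^N = {1,…,N}^d` (represented as `Fin d → Fin N`), with
Euclidean norm on `ℝ^d`. -/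
noncomputable def srpEnergy (d N : ℕ) (π : Equiv.Perm (Fin d → Fin N)) : ℝ :=
  ∑ x : Fin d → Fin N, Real.sqrt (∑ i : Fin d, ((x i : ℝ) - ((π x) i : ℝ)) ^ 2)

/-- The partition function `Z^N_β = Σ_π e^{−β H^N(π)}`. -/
noncomputable def srpZ (d N : ℕ) (β : ℝ) : ℝ :=
  ∑ π : Equiv.Perm (Fin d → Fin N), Real.exp (-β * srpEnergy d N π)

/-- The Boltzmann probability `P^N_β(π) = e^{−β H^N(π)} / Z^N_β`. -/
noncomputable def srpP (d N : ℕ) (β : ℝ) (π : Equiv.Perm (Fin d → Fin N)) : ℝ :=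
  Real.exp (-β * srpEnergy d N π) / srpZ d N β

/-- The mean displacement per site `D^N_β = N^{−d} Σ_π P^N_β(π) H^N(π)`. -/
noncomputable def srpD (d N : ℕ) (β : ℝ) : ℝ :=
  (1 / (N : ℝ) ^ d) * ∑ π : Equiv.Perm (Fin d → Fin N), srpP d N β π * srpEnergy d N π

lemma srpEnergy_nonneg (d N : ℕ) (π : Equiv.Perm (Fin d → Fin N)) :
    0 ≤ srpEnergy d N π :=
  Finset.sum_nonneg fun _ _ => Real.sqrt_nonneg _

lemma srpEnergy_le (d N : ℕ) (π : Equiv.Perm (Fin d → Fin N)) :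
    srpEnergy d N π ≤ (N : ℝ) ^ d * ((N : ℝ) * Real.sqrt d) := by
  calc srpEnergy d N π ≤ ∑ _x : Fin d → Fin N, ((N : ℝ) * Real.sqrt d) := by
        apply Finset.sum_le_sum
        intro x _
        have h1 : (∑ i : Fin d, ((x i : ℝ) - ((π x) i : ℝ)) ^ 2) ≤ ∑ _i : Fin d, (N : ℝ) ^ 2 := by
          apply Finset.sum_le_sum
          intro i _
          apply sq_le_sq'
          · have h1 : (x i : ℝ) ≥ 0 := Nat.cast_nonneg _
            have h2 : ((π x) i : ℝ) ≤ N := le_of_lt (by exact_mod_cast (π x i).isLt)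
            linarith
          · have h1 : ((π x) i : ℝ) ≥ 0 := Nat.cast_nonneg _
            have h2 : (x i : ℝ) ≤ N := le_of_lt (by exact_mod_cast (x i).isLt)
            linarith
        calc Real.sqrt (∑ i : Fin d, ((x i : ℝ) - ((π x) i : ℝ)) ^ 2)
            ≤ Real.sqrt (∑ _i : Fin d, (N : ℝ) ^ 2) := Real.sqrt_le_sqrt h1
          _ = (N : ℝ) * Real.sqrt d := by
              rw [Finset.sum_const, Finset.card_univ, Fintype.card_fin, nsmul_eq_mul,
                Real.sqrt_mul (by positivity), Real.sqrt_sq (by positivity), mul_comm]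
    _ = (N : ℝ) ^ d * ((N : ℝ) * Real.sqrt d) := by
        rw [Finset.sum_const, nsmul_eq_mul, Finset.card_univ]
        simp [Fintype.card_fun]

lemma srpZ_le (d N : ℕ) (β : ℝ) (hβ : 0 ≤ β) :
    srpZ d N β ≤ ((Nat.factorial (N ^ d) : ℕ) : ℝ) := by
  calc srpZ d N β ≤ ∑ _π : Equiv.Perm (Fin d → Fin N), (1 : ℝ) := by
        apply Finset.sum_le_sum
        intro π _
        rw [show (1:ℝ) = Real.exp 0 by simp]
        apply Real.exp_le_exp.2
        have := srpEnergy_nonneg d N π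
        nlinarith
    _ = ((Nat.factorial (N ^ d) : ℕ) : ℝ) := by
        rw [Finset.sum_const, nsmul_eq_mul, mul_one, Finset.card_univ]
        simp [Fintype.card_perm, Fintype.card_fun]

lemma srpZ_ge (d N : ℕ) (β : ℝ) (hβ : 0 ≤ β) :
    ((Nat.factorial (N ^ d) : ℕ) : ℝ) *
      Real.exp (-β * ((N : ℝ) ^ d * ((N : ℝ) * Real.sqrt d))) ≤ srpZ d N β := by
  calc ((Nat.factorial (N ^ d) : ℕ) : ℝ) *
      Real.exp (-β * ((N : ℝ) ^ d * ((N : ℝ) * Real.sqrt d)))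
      = ∑ _π : Equiv.Perm (Fin d → Fin N),
          Real.exp (-β * ((N : ℝ) ^ d * ((N : ℝ) * Real.sqrt d))) := by
        rw [Finset.sum_const, nsmul_eq_mul, Finset.card_univ]
        simp [Fintype.card_perm, Fintype.card_fun]
    _ ≤ srpZ d N β := by
        apply Finset.sum_le_sum
        intro π _
        apply Real.exp_le_exp.2
        have := srpEnergy_le d N π
        nlinarith

/-- **KMS permanent asymptotics, subcritical regime, general dimension:**
if `N·β(N) → 0` then `(1/N^d) log perm(A^N_β) = (1/N^d) log((N^d)!) + o(1)`. -/
theorem kms_permanent_subcritical (d : ℕ) (hd : 1 ≤ d) (β : ℕ → ℝ)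
    (hβpos : ∀ N, 0 < β N)
    (hβN : Tendsto (fun N : ℕ => (N : ℝ) * β N) atTop (𝓝 0)) :
    Tendsto (fun N : ℕ => (1 / (N : ℝ) ^ d) * Real.log (srpZ d N (β N)) -
        (1 / (N : ℝ) ^ d) * Real.log ((Nat.factorial (N ^ d) : ℕ) : ℝ)) atTop (𝓝 0) := by
  have hlow : Tendsto (fun N : ℕ => -Real.sqrt d * ((N : ℝ) * β N)) atTop (𝓝 0) := by
    have := hβN.const_mul (-Real.sqrt d)
    simpa using this
  apply tendsto_of_tendsto_of_tendsto_of_le_of_le' hlow tendsto_const_nhds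
  · filter_upwards [eventually_ge_atTop 1] with N hN
    have hNpos : (0:ℝ) < (N:ℝ) ^ d := by positivity
    have hfac : (0:ℝ) < ((Nat.factorial (N ^ d) : ℕ) : ℝ) := by
      exact_mod_cast Nat.factorial_pos _
    have hZge := srpZ_ge d N (β N) (hβpos N).le
    have hZpos : 0 < srpZ d N (β N) := lt_of_lt_of_le (by positivity) hZge
    have hlog : Real.log (((Nat.factorial (N ^ d) : ℕ) : ℝ)) +
        (-(β N) * ((N : ℝ) ^ d * ((N : ℝ) * Real.sqrt d))) ≤ Real.log (srpZ d N (β N)) := by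
      have := Real.log_le_log (by positivity) hZge
      rwa [Real.log_mul hfac.ne' (Real.exp_pos _).ne', Real.log_exp] at this
    have e1 : -Real.sqrt d * ((N : ℝ) * β N) =
        (1 / (N : ℝ) ^ d) * (-(β N) * ((N : ℝ) ^ d * ((N : ℝ) * Real.sqrt d))) := by
      field_simp
    have key : (1 / (N : ℝ) ^ d) * (-(β N) * ((N : ℝ) ^ d * ((N : ℝ) * Real.sqrt d))) ≤
        (1 / (N : ℝ) ^ d) * (Real.log (srpZ d N (β N)) -
          Real.log ((Nat.factorial (N ^ d) : ℕ) : ℝ)) :=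
      mul_le_mul_of_nonneg_left (by linarith) (by positivity)
    rw [mul_sub] at key
    linarith [e1, key]
  · filter_upwards [eventually_ge_atTop 1] with N hN
    have hNpos : (0:ℝ) < (N:ℝ) ^ d := by positivity
    have hZge := srpZ_ge d N (β N) (hβpos N).le
    have hZpos : 0 < srpZ d N (β N) := lt_of_lt_of_le (by positivity) hZge
    have hZle := srpZ_le d N (β N) (hβpos N).le
    have hlog := Real.log_le_log hZpos hZle
    have key : (1 / (N : ℝ) ^ d) * (Real.log (srpZ d N (β N)) -
        Real.log ((Nat.factorial (N ^ d) : ℕ) : ℝ)) ≤ 0 := by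
      apply mul_nonpos_of_nonneg_of_nonpos (by positivity)
      linarith
    rw [mul_sub] at key
    linarith
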